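/- arXiv:1103.4229 — 4 statements merged into one kernel-verified Lean document; each statement's English description precedes it below -/
import Mathlib

section
/- For every integer m ≥ 0, in ℚ[q,q⁻¹] one has h_m(q) = Σ_{g=1}^{m+1} c_g^{(m)} · f_g(q), where c_g^{(m)} = (−1)^{m+g−1}(binom(m+g, 2g−1) − binom(m+g−2, 2g−1)). -/
open LaurentPolynomial

noncomputable section

/-- `f_g(q) = q^{1-g} (1+q)^{2g-2}` as a Laurent polynomial over `ℚ`. -/
def fL (g : ℕ) : LaurentPolynomial ℚ := T (1 - (g : ℤ)) * (1 + T 1) ^ (2 * g - 2)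

/-- `h_0 = 1` and `h_m = q^m + q^{-m}` for `m ≥ 1`. -/
def hL (m : ℕ) : LaurentPolynomial ℚ := if m = 0 then 1 else T (m : ℤ) + T (-(m : ℤ))

/-- `c_g^{(m)} = (-1)^{m+g-1} (binom (m+g) (2g-1) - binom (m+g-2) (2g-1))`;
note that for `m ≥ 0`, `g ≥ 1` the truncated subtraction `m+g-2` agrees with the
convention `binom (x) (y) = 0` for `x < y` (the only negative case being `m+g-2 = -1`,
where the binomial coefficient vanishes anyway). -/
def cL (g m : ℕ) : ℚ :=
  (-1) ^ (m + g - 1) * (((m + g).choose (2 * g - 1) : ℚ) - ((m + g - 2).choose (2 * g - 1) : ℚ))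

lemma fL_succ (j : ℕ) : fL (j + 1) = fL 2 ^ j := by
  simp only [fL]
  have e : 2 * (j + 1) - 2 = (2 * 2 - 2) * j := by omega
  rw [mul_pow, T_pow, ← pow_mul, ← e]
  congr 2
  push_cast; ring

lemma pascal2 (n k : ℕ) :
    (n+2).choose (k+2) + n.choose (k+2) = n.choose k + 2 * (n+1).choose (k+2) := by
  rw [Nat.choose_succ_succ (n+1) (k+1), Nat.choose_succ_succ n k,
    Nat.choose_succ_succ n (k+1)]
  ring

lemma pascal2Q (n k : ℕ) :
    ((n+2).choose (k+2) : ℚ) = n.choose k + 2 * (n+1).choose (k+2) - n.choose (k+2) := by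
  have h := pascal2 n k
  have h2 : (((n+2).choose (k+2) + n.choose (k+2) : ℕ) : ℚ)
      = ((n.choose k + 2 * (n+1).choose (k+2) : ℕ) : ℚ) := by rw [h]
  push_cast at h2
  linarith

lemma cL_vanish {g m : ℕ} (h : m + 2 ≤ g) : cL g m = 0 := by
  have h1 : m + g < 2 * g - 1 := by omega
  have h2 : m + g - 2 < 2 * g - 1 := by omega
  simp [cL, Nat.choose_eq_zero_of_lt h1, Nat.choose_eq_zero_of_lt h2]

lemma key0 (m : ℕ) : cL 1 (m + 3) = -2 * cL 1 (m + 2) - cL 1 (m + 1) := by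
  simp only [cL]
  have e1 : m + 3 + 1 - 1 = m + 3 := by omega
  have e2 : m + 2 + 1 - 1 = m + 2 := by omega
  have e3 : m + 1 + 1 - 1 = m + 1 := by omega
  have e4 : 2 * 1 - 1 = 1 := by omega
  rw [e1, e2, e3, e4]
  have e5 : m + 3 + 1 - 2 = m + 2 := by omega
  have e6 : m + 2 + 1 - 2 = m + 1 := by omega
  have e7 : m + 1 + 1 - 2 = m := by omega
  rw [e5, e6, e7]
  simp only [Nat.choose_one_right]
  push_cast
  ring

lemma key (m j : ℕ) :
    cL (j + 2) (m + 2) = cL (j + 1) (m + 1) - 2 * cL (j + 2) (m + 1) - cL (j + 2) m := by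
  simp only [cL]
  have e1 : m + 2 + (j + 2) - 1 = m + j + 3 := by omega
  have e2 : m + 1 + (j + 1) - 1 = m + j + 1 := by omega
  have e3 : m + 1 + (j + 2) - 1 = m + j + 2 := by omega
  have e4 : m + (j + 2) - 1 = m + j + 1 := by omega
  have f1 : m + 2 + (j + 2) = m + j + 4 := by omega
  have f2 : m + 2 + (j + 2) - 2 = m + j + 2 := by omega
  have f3 : m + 1 + (j + 1) = m + j + 2 := by omega
  have f4 : m + 1 + (j + 1) - 2 = m + j := by omega
  have f5 : m + 1 + (j + 2) = m + j + 3 := by omega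
  have f6 : m + 1 + (j + 2) - 2 = m + j + 1 := by omega
  have f7 : m + (j + 2) = m + j + 2 := by omega
  have f8 : m + (j + 2) - 2 = m + j := by omega
  have g1 : 2 * (j + 2) - 1 = 2 * j + 1 + 2 := by omega
  have g2 : 2 * (j + 1) - 1 = 2 * j + 1 := by omega
  rw [e1, e2, e3, e4, f2, f4, f6, f8, f1, f3, f5, f7, g1, g2]
  have h1 := pascal2Q (m + j + 2) (2 * j + 1)
  have h2 := pascal2Q (m + j) (2 * j + 1)
  have e : m + j + 2 + 2 = m + j + 4 := by omega
  have e' : m + j + 1 + 1 = m + j + 2 := by omega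
  rw [e] at h1
  rw [e'] at h2
  have p3 : (-1 : ℚ) ^ (m + j + 3) = -(-1 : ℚ) ^ (m + j) := by
    rw [pow_add]; ring
  have p1 : (-1 : ℚ) ^ (m + j + 1) = -(-1 : ℚ) ^ (m + j) := by
    rw [pow_add]; ring
  have p2 : (-1 : ℚ) ^ (m + j + 2) = (-1 : ℚ) ^ (m + j) := by
    rw [pow_add]; ring
  rw [p3, p1, p2]
  linear_combination (-(-1 : ℚ) ^ (m + j)) * h1 + ((-1 : ℚ) ^ (m + j)) * h2


lemma fL2_eq : fL 2 = T (-1) + 2 + T 1 := by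
  simp only [fL]
  have : (1 : ℤ) - (2 : ℕ) = -1 := by norm_num
  rw [this]
  have e : 2 * 2 - 2 = 2 := by omega
  rw [e]
  have : ((1 : LaurentPolynomial ℚ) + T 1) ^ 2 = 1 + 2 * T 1 + T 1 * T 1 := by ring
  rw [this, ← T_add]
  have h0 : (T (-1) : LaurentPolynomial ℚ) * 1 = T (-1) := mul_one _
  have h1 : (T (-1) : LaurentPolynomial ℚ) * T 1 = 1 := by rw [← T_add]; norm_num [T_zero]
  have h2 : (T (-1) : LaurentPolynomial ℚ) * T (1 + 1) = T 1 := by rw [← T_add]; norm_num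
  calc T (-1) * (1 + 2 * T 1 + T (1+1)) 
      = T (-1) * 1 + 2 * (T (-1) * T 1) + T (-1) * T (1+1) := by ring
    _ = T (-1) + 2 + T 1 := by rw [h0, h1, h2]; ring

lemma hrec (m : ℕ) : hL (m + 3) = (fL 2 - 2) * hL (m + 2) - hL (m + 1) := by
  simp only [hL, Nat.succ_ne_zero, if_false, fL2_eq]
  have key : ∀ a b : ℤ, (T a : LaurentPolynomial ℚ) * T b = T (a + b) := fun a b => (T_add a b).symm
  have expand : (T (-1) + 2 + T 1 - 2 : LaurentPolynomial ℚ) * (T (m + 2 : ℕ) + T (-(m + 2 : ℕ)))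
      = T (-1) * T (m + 2 : ℕ) + T (-1) * T (-(m + 2 : ℕ)) + T 1 * T (m + 2 : ℕ)
        + T 1 * T (-(m + 2 : ℕ)) := by ring
  rw [expand, key, key, key, key]
  have a1 : (-1 : ℤ) + (m + 2 : ℕ) = ((m + 1 : ℕ) : ℤ) := by push_cast; ring
  have a2 : (-1 : ℤ) + -((m + 2 : ℕ) : ℤ) = -((m + 3 : ℕ) : ℤ) := by push_cast; ring
  have a3 : (1 : ℤ) + ((m + 2 : ℕ) : ℤ) = ((m + 3 : ℕ) : ℤ) := by push_cast; ring
  have a4 : (1 : ℤ) + -((m + 2 : ℕ) : ℤ) = -((m + 1 : ℕ) : ℤ) := by push_cast; ring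
  rw [a1, a2, a3, a4]
  ring

def SL (m : ℕ) : LaurentPolynomial ℚ := ∑ j ∈ Finset.range (m+1), cL (j+1) m • fL 2 ^ j

lemma SL_ext (m n : ℕ) (h : m + 1 ≤ n) : ∑ j ∈ Finset.range n, cL (j+1) m • fL 2 ^ j = SL m := by
  rw [SL]
  refine (Finset.sum_subset (Finset.range_subset_range.2 (by omega)) ?_).symm
  intro j hj hj'
  simp only [Finset.mem_range] at hj hj'
  rw [cL_vanish (by omega), zero_smul]

lemma Icc_shift {M : Type*} [AddCommMonoid M] (f : ℕ → M) (m : ℕ) :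
    ∑ g ∈ Finset.Icc 1 (m+1), f g = ∑ j ∈ Finset.range (m+1), f (j+1) := by
  induction m with
  | zero => simp
  | succ n ih =>
      rw [Finset.sum_range_succ, ← ih, ← Finset.sum_Icc_succ_top (by omega : 1 ≤ n + 1 + 1)]

lemma SL_rec (m : ℕ) : SL (m+3) = (fL 2 - 2) * SL (m+2) - SL (m+1) := by
  have e1 : SL (m+3) = ∑ j ∈ Finset.range (m+3), cL (j+2) (m+3) • fL 2 ^ (j+1)
      + cL 1 (m+3) • fL 2 ^ 0 :=
    Finset.sum_range_succ' (fun j => cL (j+1) (m+3) • fL 2 ^ j) (m+3)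
  have e2 : ∀ j ∈ Finset.range (m+3), cL (j+2) (m+3) • fL 2 ^ (j+1)
      = cL (j+1) (m+2) • fL 2 ^ (j+1) - (2*cL (j+2) (m+2)) • fL 2 ^ (j+1)
        - cL (j+2) (m+1) • fL 2 ^ (j+1) := by
    intro j _
    rw [key (m+1) j, sub_smul, sub_smul]
  rw [e1, Finset.sum_congr rfl e2, Finset.sum_sub_distrib, Finset.sum_sub_distrib]
  have A : ∑ j ∈ Finset.range (m+3), cL (j+1) (m+2) • fL 2 ^ (j+1) = fL 2 * SL (m+2) := by
    rw [SL, Finset.mul_sum]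
    refine Finset.sum_congr rfl fun j _ => ?_
    rw [mul_smul_comm, ← pow_succ']
  have B : ∑ j ∈ Finset.range (m+3), (2*cL (j+2) (m+2)) • fL 2 ^ (j+1)
      = 2 * SL (m+2) - (2*cL 1 (m+2)) • fL 2 ^ 0 := by
    have := Finset.sum_range_succ' (fun j => (2*cL (j+1) (m+2)) • fL 2 ^ j) (m+3)
    rw [eq_sub_iff_add_eq, ← this]
    have : ∑ j ∈ Finset.range (m+3+1), (2*cL (j+1) (m+2)) • fL 2 ^ j
        = 2 * ∑ j ∈ Finset.range (m+3+1), cL (j+1) (m+2) • fL 2 ^ j := by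
      rw [Finset.mul_sum]
      refine Finset.sum_congr rfl fun j _ => ?_
      rw [mul_comm (2:ℚ), mul_smul, two_smul ℚ, smul_add, two_mul]
    rw [this, SL_ext (m+2) _ (by omega)]
  have Cc : ∑ j ∈ Finset.range (m+3), cL (j+2) (m+1) • fL 2 ^ (j+1)
      = SL (m+1) - cL 1 (m+1) • fL 2 ^ 0 := by
    have := Finset.sum_range_succ' (fun j => cL (j+1) (m+1) • fL 2 ^ j) (m+3)
    rw [eq_sub_iff_add_eq, ← this]
    exact SL_ext (m+1) _ (by omega)
  rw [A, B, Cc]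
  have hc : cL 1 (m+3) + 2*cL 1 (m+2) + cL 1 (m+1) = 0 := by
    have := key0 m
    linarith
  have hC : cL 1 (m+3) • (fL 2 ^ 0) + (2*cL 1 (m+2)) • (fL 2 ^ 0)
      + cL 1 (m+1) • (fL 2 ^ 0) = 0 := by
    rw [← add_smul, ← add_smul, hc, zero_smul]
  linear_combination hC

lemma ratsmul (a : ℚ) (p : LaurentPolynomial ℚ) : a • p = C a * p := by
  rw [Algebra.smul_def, C_eq_algebraMap]

lemma SL0 : hL 0 = SL 0 := by
  norm_num [SL, hL, cL]

lemma SL1 : hL 1 = SL 1 := by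
  have : SL 1 = cL 1 1 • fL 2 ^ 0 + cL 2 1 • fL 2 ^ 1 := by
    rw [SL, Finset.sum_range_succ, Finset.sum_range_one]
  rw [this]
  have h13 : Nat.choose 1 3 = 0 := rfl
  have hC2 : C (2 : ℚ) = 2 := by
    rw [map_ofNat]
  norm_num [cL, hL, ratsmul, fL2_eq, h13, hC2]
  ring

lemma SL2 : hL 2 = SL 2 := by
  have hs : SL 2 = cL 1 2 • fL 2 ^ 0 + cL 2 2 • fL 2 ^ 1 + cL 3 2 • fL 2 ^ 2 := by
    rw [SL, Finset.sum_range_succ, Finset.sum_range_succ, Finset.sum_range_one]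
  have r1 : Nat.choose 3 1 = 3 := rfl
  have r2 : Nat.choose 1 1 = 1 := rfl
  have r3 : Nat.choose 4 3 = 4 := rfl
  have r4 : Nat.choose 2 3 = 0 := rfl
  have r5 : Nat.choose 5 5 = 1 := rfl
  have r6 : Nat.choose 3 5 = 0 := rfl
  have c1 : cL 1 2 = 2 := by norm_num [cL, r1, r2]
  have c2 : cL 2 2 = -4 := by norm_num [cL, r3, r4]
  have c3 : cL 3 2 = 1 := by norm_num [cL, r5, r6]
  rw [hs, c1, c2, c3, fL2_eq]
  have key : ∀ a b : ℤ, (T a : LaurentPolynomial ℚ) * T b = T (a+b) := fun a b => (T_add a b).symm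
  have sq : (T (-1) + 2 + T 1 : LaurentPolynomial ℚ)^2
      = T (-2) + T 2 + 4*T (-1) + 4*T 1 + 6 := by
    have e : (T (-1) + 2 + T 1 : LaurentPolynomial ℚ)^2
        = T (-1)*T (-1) + T 1*T 1 + 2*(T (-1)*T 1) + 4*T (-1) + 4*T 1 + 4 := by ring
    rw [e, key, key, key]
    norm_num [T_zero]
    ring
  have hC2 : C (2 : ℚ) = 2 := by rw [map_ofNat]
  have hC4 : C (-4 : ℚ) = -4 := by rw [map_neg, map_ofNat]
  rw [pow_zero, pow_one, sq, ratsmul, ratsmul, ratsmul, hC2, hC4, map_one]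
  have : hL 2 = T (2:ℤ) + T (-2:ℤ) := by norm_num [hL]
  rw [this]
  ring

lemma hL_eq_SL (m : ℕ) : hL m = SL m := by
  induction m using Nat.strong_induction_on with
  | _ m ih =>
    match m with
    | 0 => exact SL0
    | 1 => exact SL1
    | 2 => exact SL2
    | (n+3) => rw [hrec n, SL_rec n, ih (n+2) (by omega), ih (n+1) (by omega)]

/-- For every `m ≥ 0`, in `ℚ[q,q⁻¹]` one has `h_m = ∑_{g=1}^{m+1} c_g^{(m)} f_g`. -/
theorem stmt1 (m : ℕ) :
    hL m = ∑ g ∈ Finset.Icc 1 (m + 1), cL g m • fL g := by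
  rw [Icc_shift (fun g => cL g m • fL g) m, hL_eq_SL, SL]
  exact Finset.sum_congr rfl fun j _ => by rw [fL_succ j]

end
end

section
/- Let d be a positive integer and a : ℤ → ℚ a function such that a(n) = a(n') whenever d divides n − n' or d divides n + n'. Then there exists a rational function F ∈ ℚ(q) such that the formal power series Σ_{n≥1} (−1)^{n−1} n a(n) q^n is the Laurent expansion of F at q = 0, and F is fixed by the field automorphism of ℚ(q) sending q to q⁻¹, i.e. F(1/q) = F(q). -/
/-!
Put `c(n) = (-1)^(n-1) a(n)` on `ℤ`; it is `2d`-periodic and even. For any `D`-periodic `c`,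
`(1 - q^D)^2 ∑ n c(n) q^n` is the polynomial `N = ∑_{m ≤ 2D} min(m, 2D - m) c(m) q^m`, so the
series is the expansion of `N / (1 - q^D)^2`. When `c` is also even, `N` is self-reciprocal of
degree `2D`, and so is `(1 - q^D)^2`; hence `q ↦ q⁻¹` multiplies numerator and denominator by
the same factor `q^(-2D)`.
-/

open Polynomial Function

noncomputable section

section Tent

variable {R : Type*} [CommRing R]

/-- The weight `min m (2D - m)` is the tent function of `m`, which (by ℕ-subtraction) vanishes
for `m ≥ 2D`. -/
def tentPolynomial (c : ℤ → R) (D : ℕ) : R[X] :=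
  ∑ m ∈ Finset.range (2 * D + 1), C ((min m (2 * D - m) : ℕ) * c m) * X ^ m

theorem coeff_tentPolynomial (c : ℤ → R) (D k : ℕ) :
    (tentPolynomial c D).coeff k = (min k (2 * D - k) : ℕ) * c k := by
  rw [tentPolynomial, finsetSum_coeff]
  simp only [coeff_C_mul_X_pow, Finset.sum_ite_eq, Finset.mem_range]
  split_ifs with hk
  · rfl
  · rw [show min k (2 * D - k) = 0 by omega, Nat.cast_zero, zero_mul]

theorem natDegree_tentPolynomial_le (c : ℤ → R) (D : ℕ) :
    (tentPolynomial c D).natDegree ≤ 2 * D :=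
  natDegree_sum_le_of_forall_le _ _ fun m hm =>
    (natDegree_C_mul_X_pow_le _ m).trans (Nat.lt_succ_iff.mp (Finset.mem_range.mp hm))

theorem reflect_tentPolynomial {c : ℤ → R} {D : ℕ} (hper : Periodic c D)
    (heven : Function.Even c) :
    (tentPolynomial c D).reflect (2 * D) = tentPolynomial c D := by
  ext k
  rw [coeff_reflect, coeff_tentPolynomial, coeff_tentPolynomial]
  rcases le_or_gt k (2 * D) with hk | hk
  · have hc : c ((2 * D - k : ℕ) : ℤ) = c k := by
      have h2 : c (-k + 2 * D) = c (-k) := by simpa using hper.nat_mul 2 (-k)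
      rw [Nat.cast_sub hk, sub_eq_neg_add, Nat.cast_mul, Nat.cast_two, h2, heven k]
    rw [revAt_le hk, hc,
      show min (2 * D - k) (2 * D - (2 * D - k)) = min k (2 * D - k) by omega]
  · rw [revAt_eq_self_of_lt hk]

theorem coeff_X_pow_mul_mk_natCast_mul {c : ℤ → R} {j : ℕ} (hper : Periodic c j) (k : ℕ) :
    PowerSeries.coeff k (PowerSeries.X ^ j * PowerSeries.mk fun n => (n : R) * c n) =
      ((k - j : ℕ) : R) * c k := by
  rw [PowerSeries.coeff_X_pow_mul', PowerSeries.coeff_mk]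
  split_ifs with h
  · rw [Nat.cast_sub h, Nat.cast_sub h, hper.sub_eq]
  · rw [Nat.sub_eq_zero_of_le (by omega), Nat.cast_zero, zero_mul]

theorem one_sub_X_pow_sq_mul_mk_natCast_mul {c : ℤ → R} {D : ℕ} (hper : Periodic c D) :
    (((1 - X ^ D) ^ 2 : R[X]) : PowerSeries R) * (PowerSeries.mk fun n => (n : R) * c n) =
      tentPolynomial c D := by
  set S := PowerSeries.mk fun n => (n : R) * c n
  have hexp : (((1 - X ^ D) ^ 2 : R[X]) : PowerSeries R) * S =
      S - (PowerSeries.X ^ D * S + PowerSeries.X ^ D * S) + PowerSeries.X ^ (2 * D) * S := by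
    push_cast
    ring
  have hper2 : Periodic c (2 * D : ℕ) := by
    simpa using hper.nat_mul 2
  ext k
  rw [hexp, Polynomial.coeff_coe, coeff_tentPolynomial]
  simp only [map_add, map_sub, coeff_X_pow_mul_mk_natCast_mul hper,
    coeff_X_pow_mul_mk_natCast_mul hper2, S, PowerSeries.coeff_mk]
  have htent : k + (k - 2 * D) = min k (2 * D - k) + 2 * (k - D) := by omega
  have := congrArg (Nat.cast (R := R)) htent
  push_cast at this
  linear_combination (c k) * this

theorem natDegree_one_sub_X_pow_le (D : ℕ) : (1 - X ^ D : R[X]).natDegree ≤ D :=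
  (natDegree_sub_le_of_le (natDegree_one.trans_le D.zero_le) (natDegree_X_pow_le D)).trans_eq
    (max_self D)

theorem natDegree_one_sub_X_pow_sq_le (D : ℕ) : ((1 - X ^ D : R[X]) ^ 2).natDegree ≤ 2 * D :=
  natDegree_pow_le_of_le 2 (natDegree_one_sub_X_pow_le D)

theorem reflect_one_sub_X_pow_sq (D : ℕ) :
    ((1 - X ^ D : R[X]) ^ 2).reflect (2 * D) = (1 - X ^ D) ^ 2 := by
  rw [two_mul, sq, reflect_mul _ _ (natDegree_one_sub_X_pow_le D) (natDegree_one_sub_X_pow_le D),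
    reflect_sub, reflect_one, reflect_monomial, revAt_le le_rfl, Nat.sub_self, pow_zero]
  ring

theorem one_sub_X_pow_ne_zero [Nontrivial R] {D : ℕ} (hD : 0 < D) : (1 - X ^ D : R[X]) ≠ 0 := by
  intro h
  simpa [hD.ne] using congrArg (coeff · 0) h

end Tent

namespace RatFunc

variable {K : Type*} [Field K]

theorem ringHom_algebraMap_mul_X_pow {φ : RatFunc K →+* RatFunc K} (hC : ∀ k, φ (C k) = C k)
    (hX : φ X = X⁻¹) {p : K[X]} {n : ℕ} (hp : p.natDegree ≤ n) :
    φ (algebraMap K[X] (RatFunc K) p) * X ^ n = algebraMap K[X] (RatFunc K) (p.reflect n) := by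
  have hφp : φ (algebraMap K[X] (RatFunc K) p) = eval₂ C X⁻¹ p := by
    change φ.comp (algebraMap K[X] (RatFunc K)) p = eval₂RingHom C X⁻¹ p
    congr 1
    refine Polynomial.ringHom_ext (fun k => ?_) ?_
    · simp [algebraMap_C, hC]
    · simp [algebraMap_X, hX]
  have heval (q : K[X]) : eval₂ C X q = algebraMap K[X] (RatFunc K) q := by
    rw [← algebraMap_eq_C, ← aeval_def, ← algebraMap_X, aeval_algebraMap_apply,
      aeval_X_left_apply]
  let : Invertible (X⁻¹ : RatFunc K) := invertibleOfNonzero (inv_ne_zero X_ne_zero)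
  have hrefl := eval₂_reflect_mul_pow C X⁻¹ n p hp
  rw [invOf_eq_inv, inv_inv, heval] at hrefl
  rw [hφp, ← hrefl, mul_assoc, ← mul_pow, inv_mul_cancel₀ X_ne_zero, one_pow, mul_one]

theorem ringHom_div_eq_of_reflect {φ : RatFunc K →+* RatFunc K} (hC : ∀ k, φ (C k) = C k)
    (hX : φ X = X⁻¹) {p q : K[X]} {n : ℕ} (hp : p.natDegree ≤ n) (hq : q.natDegree ≤ n)
    (hpr : p.reflect n = p) (hqr : q.reflect n = q) :
    φ (algebraMap K[X] (RatFunc K) p / algebraMap K[X] (RatFunc K) q) =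
      algebraMap K[X] (RatFunc K) p / algebraMap K[X] (RatFunc K) q := by
  rw [map_div₀, ← mul_div_mul_right _ _ (pow_ne_zero n X_ne_zero),
    ringHom_algebraMap_mul_X_pow hC hX hp, ringHom_algebraMap_mul_X_pow hC hX hq, hpr, hqr]

theorem coe_div_algebraMap_eq_of_mul_eq {p q : K[X]} {S : PowerSeries K} (hq : q ≠ 0)
    (h : (q : PowerSeries K) * S = p) :
    ((algebraMap K[X] (RatFunc K) p / algebraMap K[X] (RatFunc K) q : RatFunc K) :
      LaurentSeries K) = S := by
  rw [map_div₀, ← coePolynomial_eq_algebraMap, ← coePolynomial_eq_algebraMap, ← coe_coe,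
    ← coe_coe, div_eq_iff, ← h, PowerSeries.coe_mul, mul_comm]
  exact (map_ne_zero_iff _ HahnSeries.ofPowerSeries_injective).mpr
    (Polynomial.coe_eq_zero_iff.not.mpr hq)

end RatFunc

theorem exists_symmetric_ratFunc_coe_eq_mk_natCast_mul {K : Type*} [Field K] {c : ℤ → K}
    {D : ℕ} (hD : 0 < D) (hper : Periodic c D) (heven : Function.Even c) :
    ∃ F : RatFunc K, (F : LaurentSeries K) = PowerSeries.mk (fun n => (n : K) * c n) ∧
      ∀ φ : RatFunc K →+* RatFunc K, (∀ k, φ (RatFunc.C k) = RatFunc.C k) →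
        φ RatFunc.X = RatFunc.X⁻¹ → φ F = F :=
  ⟨_, RatFunc.coe_div_algebraMap_eq_of_mul_eq (pow_ne_zero 2 (one_sub_X_pow_ne_zero hD))
      (one_sub_X_pow_sq_mul_mk_natCast_mul hper),
    fun _ hC hX => RatFunc.ringHom_div_eq_of_reflect hC hX (natDegree_tentPolynomial_le c D)
      (natDegree_one_sub_X_pow_sq_le D) (reflect_tentPolynomial hper heven)
      (reflect_one_sub_X_pow_sq D)⟩

/-- Let `d > 0` and let `a : ℤ → ℚ` satisfy `a n = a n'` whenever `d ∣ n - n'` or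
`d ∣ n + n'`.  Then there is a rational function `F ∈ ℚ(q)` whose Laurent expansion
at `q = 0` (i.e. its image in `ℚ((q))` under the canonical embedding) is the power
series `∑_{n ≥ 1} (-1)^{n-1} n a(n) q^n`, and `F` is fixed by the field automorphism
of `ℚ(q)` sending `q` to `q⁻¹` (formulated: any ring homomorphism of `ℚ(q)` sending
`q` to `q⁻¹` fixes `F`; such a homomorphism is necessarily that automorphism). -/
theorem stmt4 (d : ℕ) (hd : 0 < d) (a : ℤ → ℚ)
    (ha : ∀ n n' : ℤ, ((d : ℤ) ∣ n - n' ∨ (d : ℤ) ∣ n + n') → a n = a n') :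
    ∃ F : RatFunc ℚ,
      (F : LaurentSeries ℚ) =
        ((PowerSeries.mk fun n => if n = 0 then 0 else (-1) ^ (n - 1) * n * a n :
            PowerSeries ℚ) : LaurentSeries ℚ) ∧
      ∀ φ : RatFunc ℚ →+* RatFunc ℚ, φ RatFunc.X = (RatFunc.X)⁻¹ → φ F = F := by
  set c : ℤ → ℚ := fun n => -(-1) ^ n * a n
  have hper : Periodic c (2 * d : ℕ) := fun n => by
    have hsign : (-1 : ℚ) ^ (n + (2 * d : ℕ)) = (-1) ^ n := by
      rw [zpow_add₀ (by norm_num), zpow_natCast, pow_mul]; norm_num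
    simp only [c, hsign, ha (n + (2 * d : ℕ)) n (Or.inl ⟨2, by push_cast; ring⟩)]
  have heven : Function.Even c := fun n => by
    simp only [c, zpow_neg, ← inv_zpow, inv_neg_one, ha (-n) n (Or.inr ⟨0, by ring⟩)]
  have hcoeff : (PowerSeries.mk fun n => if n = 0 then 0 else (-1) ^ (n - 1) * n * a n :
      PowerSeries ℚ) = PowerSeries.mk fun n => (n : ℚ) * c n := by
    ext (_ | n)
    · simp
    · simp [c, pow_succ]
      ring
  obtain ⟨F, hF, hinv⟩ := exists_symmetric_ratFunc_coe_eq_mk_natCast_mul (by omega) hper heven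
  exact ⟨F, hcoeff ▸ hF,
    fun φ hφ => hinv φ (fun r => by rw [eq_ratCast RatFunc.C r, map_ratCast]) hφ⟩

end
end

section
/- Let a : ℤ_{≥1} → ℤ. In ℚ⟦q,t⟧ the infinite product ∏_{m≥1} ∏_{j≥1} (1 − (−q)^j t^m)^{j·a(m)} converges (for each total degree only finitely many factors differ from 1 in that degree, and negative exponents denote inverses of the unit power series 1 − (−q)^j t^m), and it equals exp( Σ_{n≥1} Σ_{m≥1} ( Σ_{k ≥ 1, k ∣ gcd(n,m)} ((−1)^{n−1} n / k²) · a(m/k) ) q^n t^m ), where exp denotes the formal exponential of a power series with zero constant term. -/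
noncomputable section

open MvPowerSeries

/-- In `ℚ⟦q,t⟧ = MvPowerSeries (Fin 2) ℚ`, the variable `q`. -/
def q2 : MvPowerSeries (Fin 2) ℚ := MvPowerSeries.X 0

/-- In `ℚ⟦q,t⟧ = MvPowerSeries (Fin 2) ℚ`, the variable `t`. -/
def t2 : MvPowerSeries (Fin 2) ℚ := MvPowerSeries.X 1

/-- `1 - (-q)^j t^m` (for `m = p.1 ≥ 1`, `j = p.2 ≥ 1`) is a unit of `ℚ⟦q,t⟧`,
since its constant term is `1`. -/
theorem isUnit_factor (p : ℕ × ℕ) (hp : 1 ≤ p.1 ∧ 1 ≤ p.2) :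
    IsUnit (1 - (-q2) ^ p.2 * t2 ^ p.1) := by
  rw [MvPowerSeries.isUnit_iff_constantCoeff]
  have h1 : constantCoeff t2 = 0 := MvPowerSeries.constantCoeff_X 1
  simp [map_sub, map_mul, map_pow, h1, zero_pow (by omega : p.1 ≠ 0)]

/-- The factor `(1 - (-q)^j t^m)^{j a(m)}` of the infinite product, a `ℤ`-power of a
unit of `ℚ⟦q,t⟧`; factors with `m = 0` or `j = 0` are set to `1` (they do not occur
in the product `∏_{m ≥ 1} ∏_{j ≥ 1}`). -/
def factor (a : ℕ → ℤ) (p : ℕ × ℕ) : MvPowerSeries (Fin 2) ℚ :=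
  if hp : 1 ≤ p.1 ∧ 1 ≤ p.2 then
    (((isUnit_factor p hp).unit ^ ((p.2 : ℤ) * a p.1) : (MvPowerSeries (Fin 2) ℚ)ˣ) :
      MvPowerSeries (Fin 2) ℚ)
  else 1

/-- The formal exponential of a power series with zero constant term: for such `F`,
`coeff e (F^i) = 0` whenever `i` exceeds the total degree of `e`, so the coefficient
of `exp F = ∑_{i≥0} F^i / i!` at `e` is the finite sum below. -/
def expMv (F : MvPowerSeries (Fin 2) ℚ) : MvPowerSeries (Fin 2) ℚ :=
  fun e => ∑ i ∈ Finset.range (e 0 + e 1 + 1),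
    ((i.factorial : ℚ))⁻¹ * MvPowerSeries.coeff e (F ^ i)

/-- The power series `∑_{n≥1} ∑_{m≥1} (∑_{k ∣ gcd(n,m)} ((-1)^{n-1} n / k²) a(m/k)) qⁿ tᵐ`
(with zero constant term), given by its coefficient function. -/
def rhsSeries (a : ℕ → ℤ) : MvPowerSeries (Fin 2) ℚ :=
  fun e =>
    if 1 ≤ e 0 ∧ 1 ≤ e 1 then
      ∑ k ∈ (Nat.gcd (e 0) (e 1)).divisors,
        (-1) ^ (e 0 - 1) * (e 0 : ℚ) / (k : ℚ) ^ 2 * (a (e 1 / k) : ℚ)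
    else 0


/-!
Writing `x = (-q)ʲ tˡ`, the factor `(1 - x)^(j a(l))` is `exp (j a(l) log (1 - x))` with
`log (1 - x) = -∑_{k ≥ 1} xᵏ / k`, so a finite partial product is the exponential of the sum of
these logarithms. The monomial `qⁿ tᵐ` occurs in that sum exactly for `(j, l) = (n / k, m / k)`
with `k` a common divisor of `n` and `m`, with coefficient `-(n / k) a(m / k) (-1)ⁿ / k`; summing
over `k` gives the stated coefficient. In particular the factors with `j > n` or `l > m` do not
affect the coefficient of `qⁿ tᵐ`, which gives the convergence.

The identities `exp (F + G) = exp F · exp G` and `exp (log (1 - F)) = 1 - F` come from the Euler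
operator `D = ∑ᵢ Xᵢ ∂/∂Xᵢ`, a derivation multiplying the coefficient of `X^e` by `|e|`: `exp L` is
the only `Y` with constant term `1` and `D Y = D L · Y`, because this equation expresses each
coefficient of `Y` through coefficients of lower degree.
-/

open Finset

theorem Derivation.map_inv_natCast_smul_pow_succ {K A : Type*} [Field K] [CharZero K]
    [CommRing A] [Algebra K A] (D : Derivation K A A) (a : A) (n : ℕ) :
    D (((n + 1 : ℕ) : K)⁻¹ • a ^ (n + 1)) = a ^ n * D a := by
  rw [D.map_smul, D.leibniz_pow, Nat.add_sub_cancel, ← Nat.cast_smul_eq_nsmul K, smul_smul,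
    inv_mul_cancel₀ (Nat.cast_ne_zero.mpr n.succ_ne_zero), one_smul, smul_eq_mul]

theorem Finsupp.degree_fin_two (e : Fin 2 →₀ ℕ) : e.degree = e 0 + e 1 := by
  rw [Finsupp.degree_eq_sum, Fin.sum_univ_two]

namespace MvPowerSeries

variable {σ : Type*}

section CommSemiring

variable {R : Type*} [CommSemiring R]

def eulerDerivFun (F : MvPowerSeries σ R) : MvPowerSeries σ R :=
  fun e => e.degree • coeff e F

theorem coeff_eulerDerivFun (F : MvPowerSeries σ R) (e : σ →₀ ℕ) :
    coeff e (eulerDerivFun F) = e.degree • coeff e F := rfl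

theorem eulerDerivFun_one : eulerDerivFun (1 : MvPowerSeries σ R) = 0 := by
  classical
  ext e
  rw [coeff_eulerDerivFun, coeff_one, map_zero]
  split_ifs with he
  · rw [he, map_zero, zero_smul]
  · rw [smul_zero]

theorem eulerDerivFun_mul (F G : MvPowerSeries σ R) :
    eulerDerivFun (F * G) = F * eulerDerivFun G + G * eulerDerivFun F := by
  classical
  ext e
  rw [mul_comm G, map_add, coeff_eulerDerivFun, coeff_mul, coeff_mul, coeff_mul, smul_sum,
    ← sum_add_distrib]
  refine sum_congr rfl fun x hx => ?_
  rw [← HasAntidiagonal.mem_antidiagonal.mp hx, map_add, add_smul, add_comm, coeff_eulerDerivFun,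
    coeff_eulerDerivFun, mul_smul_comm, smul_mul_assoc]

def eulerDeriv : Derivation R (MvPowerSeries σ R) (MvPowerSeries σ R) where
  toFun := eulerDerivFun
  map_add' F G := by ext e; simp only [coeff_eulerDerivFun, map_add, smul_add]
  map_smul' r F := by
    ext e
    simp only [coeff_eulerDerivFun, coeff_smul, RingHom.id_apply, mul_smul_comm]
  map_one_eq_zero' := eulerDerivFun_one
  leibniz' := eulerDerivFun_mul

theorem coeff_eulerDeriv (F : MvPowerSeries σ R) (e : σ →₀ ℕ) :
    coeff e (eulerDeriv F) = e.degree • coeff e F := rfl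

theorem constantCoeff_eulerDeriv (F : MvPowerSeries σ R) : constantCoeff (eulerDeriv F) = 0 := by
  rw [← coeff_zero_eq_constantCoeff_apply, coeff_eulerDeriv, map_zero, zero_smul]

theorem coeff_pow_eq_zero_of_degree_lt {F : MvPowerSeries σ R} (hF : constantCoeff F = 0)
    {e : σ →₀ ℕ} {n : ℕ} (he : e.degree < n) : coeff e (F ^ n) = 0 :=
  coeff_of_lt_order <| (Nat.cast_lt.mpr he).trans_le (le_order_pow_of_constantCoeff_eq_zero n hF)

theorem coeff_pow_mul_eq_zero_of_degree_le {F G : MvPowerSeries σ R} (hF : constantCoeff F = 0)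
    (hG : constantCoeff G = 0) {e : σ →₀ ℕ} {n : ℕ} (he : e.degree ≤ n) :
    coeff e (F ^ n * G) = 0 := by
  refine coeff_of_lt_order <| (Nat.cast_lt.mpr (Nat.lt_succ_of_le he)).trans_le ?_
  calc ((n + 1 : ℕ) : ℕ∞) = n + 1 := by push_cast; rfl
    _ ≤ (F ^ n).order + G.order :=
      add_le_add (le_order_pow_of_constantCoeff_eq_zero n hF)
        (one_le_order_iff_constCoeff_eq_zero.mpr hG)
    _ ≤ (F ^ n * G).order := le_order_mul

theorem sum_range_mul_coeff_pow_of_degree_lt {F : MvPowerSeries σ R} (hF : constantCoeff F = 0)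
    (w : ℕ → R) {e : σ →₀ ℕ} {N : ℕ} (hN : e.degree < N) :
    ∑ i ∈ range N, w i * coeff e (F ^ i) = ∑ i ∈ range (e.degree + 1), w i * coeff e (F ^ i) := by
  refine (sum_subset (range_subset_range.mpr hN) fun i _ hi => ?_).symm
  rw [coeff_pow_eq_zero_of_degree_lt hF (by simpa using hi), mul_zero]

theorem coeff_mul_congr {A A' B B' : MvPowerSeries σ R} {e : σ →₀ ℕ}
    (hA : ∀ u ≤ e, coeff u A = coeff u A') (hB : ∀ u ≤ e, coeff u B = coeff u B') :
    coeff e (A * B) = coeff e (A' * B') := by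
  classical
  rw [coeff_mul, coeff_mul]
  refine sum_congr rfl fun x hx => ?_
  rw [HasAntidiagonal.mem_antidiagonal] at hx
  rw [hA x.1 (hx ▸ le_self_add), hB x.2 (hx ▸ le_add_self)]

theorem coeff_pow_congr {F G : MvPowerSeries σ R} {e : σ →₀ ℕ}
    (h : ∀ u ≤ e, coeff u F = coeff u G) (n : ℕ) : coeff e (F ^ n) = coeff e (G ^ n) := by
  induction n generalizing e with
  | zero => rfl
  | succ n ih =>
    rw [pow_succ, pow_succ]
    exact coeff_mul_congr (fun u hu => ih fun v hv => h v (hv.trans hu)) h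

end CommSemiring

theorem eq_zero_of_eulerDeriv_eq_mul {R : Type*} [CommRing R] [IsAddTorsionFree R]
    {M Y : MvPowerSeries σ R} (hM : constantCoeff M = 0) (hY : constantCoeff Y = 0)
    (h : eulerDeriv Y = M * Y) : Y = 0 := by
  classical
  ext e
  induction e using WellFoundedLT.induction with
  | ind e ih =>
  rcases eq_or_ne e 0 with rfl | he
  · exact hY
  have hsum : e.degree • coeff e Y = 0 := by
    rw [← coeff_eulerDeriv, h, coeff_mul]
    refine sum_eq_zero fun x hx => ?_
    rw [HasAntidiagonal.mem_antidiagonal] at hx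
    rcases eq_or_ne x.1 0 with h1 | h1
    · rw [h1, coeff_zero_eq_constantCoeff_apply, hM, zero_mul]
    · rw [ih x.2 (hx ▸ lt_add_of_pos_left _ (pos_iff_ne_zero.mpr h1)), map_zero, mul_zero]
  rwa [smul_eq_zero, or_iff_right] at hsum
  rwa [Finsupp.degree_eq_zero_iff]

section Field

variable {K : Type*} [Field K]

def expTrunc (N : ℕ) (L : MvPowerSeries σ K) : MvPowerSeries σ K :=
  ∑ i ∈ range (N + 1), (i.factorial : K)⁻¹ • L ^ i

theorem coeff_expTrunc (N : ℕ) (L : MvPowerSeries σ K) (e : σ →₀ ℕ) :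
    coeff e (expTrunc N L) = ∑ i ∈ range (N + 1), (i.factorial : K)⁻¹ * coeff e (L ^ i) := by
  simp only [expTrunc, map_sum, coeff_smul]

theorem eulerDeriv_expTrunc_succ [CharZero K] (N : ℕ) (L : MvPowerSeries σ K) :
    eulerDeriv (expTrunc (N + 1) L) = eulerDeriv L * expTrunc N L := by
  rw [expTrunc, sum_range_succ', map_add, pow_zero, Derivation.map_smul,
    Derivation.map_one_eq_zero, smul_zero, add_zero, map_sum, expTrunc, mul_sum]
  refine sum_congr rfl fun i _ => ?_
  rw [Nat.factorial_succ, Nat.cast_mul, mul_inv_rev, mul_smul, Derivation.map_smul,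
    Derivation.map_inv_natCast_smul_pow_succ, mul_smul_comm, mul_comm]

-- The `k = 0` term vanishes because `0⁻¹ = 0`.
def logOneSubTrunc (N : ℕ) (F : MvPowerSeries σ K) : MvPowerSeries σ K :=
  -∑ k ∈ range (N + 1), (k : K)⁻¹ • F ^ k

theorem coeff_logOneSubTrunc (N : ℕ) (F : MvPowerSeries σ K) (e : σ →₀ ℕ) :
    coeff e (logOneSubTrunc N F) = -∑ k ∈ range (N + 1), (k : K)⁻¹ * coeff e (F ^ k) := by
  simp only [logOneSubTrunc, map_neg, map_sum, coeff_smul]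

theorem eulerDeriv_logOneSubTrunc_mul_one_sub [CharZero K] (N : ℕ) (F : MvPowerSeries σ K) :
    eulerDeriv (logOneSubTrunc N F) * (1 - F) = -(1 - F ^ N) * eulerDeriv F := by
  rw [logOneSubTrunc, sum_range_succ', Nat.cast_zero, inv_zero, zero_smul, add_zero, map_neg,
    map_sum, ← geom_sum_mul_neg, neg_mul, neg_mul, neg_inj, sum_mul, sum_mul, sum_mul]
  refine sum_congr rfl fun i _ => ?_
  rw [Derivation.map_inv_natCast_smul_pow_succ]
  ring

/-- `log (1 - F)` for `F` with zero constant term, whose powers `Fᵏ` with `k > degree e` do not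
contribute to the coefficient of `X^e`. -/
def logOneSub (F : MvPowerSeries σ K) : MvPowerSeries σ K :=
  fun e => coeff e (logOneSubTrunc e.degree F)

theorem coeff_logOneSub (F : MvPowerSeries σ K) (e : σ →₀ ℕ) :
    coeff e (logOneSub F) = coeff e (logOneSubTrunc e.degree F) := rfl

theorem coeff_logOneSub_of_degree_le {F : MvPowerSeries σ K} (hF : constantCoeff F = 0)
    {e : σ →₀ ℕ} {N : ℕ} (hN : e.degree ≤ N) :
    coeff e (logOneSub F) = coeff e (logOneSubTrunc N F) := by
  rw [coeff_logOneSub, coeff_logOneSubTrunc, coeff_logOneSubTrunc,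
    sum_range_mul_coeff_pow_of_degree_lt hF _ (Nat.lt_succ_of_le hN)]

theorem constantCoeff_logOneSub (F : MvPowerSeries σ K) : constantCoeff (logOneSub F) = 0 := by
  rw [← coeff_zero_eq_constantCoeff_apply, coeff_logOneSub, coeff_logOneSubTrunc, map_zero,
    zero_add, sum_range_one, Nat.cast_zero, inv_zero, zero_mul, neg_zero]

theorem eulerDeriv_logOneSub_mul_one_sub [CharZero K] {F : MvPowerSeries σ K}
    (hF : constantCoeff F = 0) : eulerDeriv (logOneSub F) * (1 - F) = -eulerDeriv F := by
  ext e
  have htrunc : ∀ u ≤ e, coeff u (eulerDeriv (logOneSub F)) =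
      coeff u (eulerDeriv (logOneSubTrunc e.degree F)) := fun u hu => by
    rw [coeff_eulerDeriv, coeff_eulerDeriv,
      coeff_logOneSub_of_degree_le hF (Finsupp.degree_mono hu)]
  rw [coeff_mul_congr htrunc fun _ _ => rfl, eulerDeriv_logOneSubTrunc_mul_one_sub, neg_mul,
    sub_mul, one_mul, neg_sub, map_sub, map_neg,
    coeff_pow_mul_eq_zero_of_degree_le hF (constantCoeff_eulerDeriv F) le_rfl, zero_sub]

theorem coeff_nsmul_logOneSub_monomial [CharZero K] {d : σ →₀ ℕ} (hd : d ≠ 0) (c : K) (k : ℕ) :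
    coeff (k • d) (logOneSub (monomial d c)) = -((k : K)⁻¹ * c ^ k) := by
  classical
  have hdeg : 0 < d.degree := Nat.pos_of_ne_zero ((Finsupp.degree_eq_zero_iff d).not.mpr hd)
  have degree_nsmul (j : ℕ) : (j • d).degree = j * d.degree := by rw [map_nsmul, smul_eq_mul]
  rw [coeff_logOneSub, coeff_logOneSubTrunc, neg_inj, sum_eq_single k]
  · rw [monomial_pow, coeff_monomial, if_pos rfl]
  · intro j _ hjk
    rw [monomial_pow, coeff_monomial, if_neg fun h => hjk (Nat.eq_of_mul_eq_mul_right hdeg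
      (by rw [← degree_nsmul, ← degree_nsmul, h])).symm, mul_zero]
  · intro hk
    rw [degree_nsmul, mem_range] at hk
    exact absurd (Nat.lt_succ_of_le (Nat.le_mul_of_pos_right k hdeg)) hk

theorem coeff_logOneSub_monomial_eq_zero {d e : σ →₀ ℕ} (c : K) (h : ∀ k ≠ 0, e ≠ k • d) :
    coeff e (logOneSub (monomial d c)) = 0 := by
  classical
  rw [coeff_logOneSub, coeff_logOneSubTrunc, neg_eq_zero]
  refine sum_eq_zero fun k _ => ?_
  rcases eq_or_ne k 0 with rfl | hk
  · rw [Nat.cast_zero, inv_zero, zero_mul]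
  · rw [monomial_pow, coeff_monomial, if_neg (h k hk), mul_zero]

end Field

end MvPowerSeries

section Exponential

variable {F G L : MvPowerSeries (Fin 2) ℚ}

theorem coeff_expMv (F : MvPowerSeries (Fin 2) ℚ) (e : Fin 2 →₀ ℕ) :
    coeff e (expMv F) = ∑ i ∈ range (e 0 + e 1 + 1), (i.factorial : ℚ)⁻¹ * coeff e (F ^ i) :=
  rfl

theorem coeff_expMv_congr {e : Fin 2 →₀ ℕ} (h : ∀ u ≤ e, coeff u F = coeff u G) :
    coeff e (expMv F) = coeff e (expMv G) := by
  simp only [coeff_expMv, coeff_pow_congr h]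

theorem coeff_expMv_of_degree_le (hL : constantCoeff L = 0) {e : Fin 2 →₀ ℕ} {N : ℕ}
    (hN : e.degree ≤ N) : coeff e (expMv L) = coeff e (expTrunc N L) := by
  rw [coeff_expTrunc, sum_range_mul_coeff_pow_of_degree_lt hL _ (Nat.lt_succ_of_le hN),
    Finsupp.degree_fin_two, coeff_expMv]

theorem constantCoeff_expMv (L : MvPowerSeries (Fin 2) ℚ) : constantCoeff (expMv L) = 1 := by
  rw [← coeff_zero_eq_constantCoeff_apply, coeff_expMv]
  simp

theorem eulerDeriv_expMv (hL : constantCoeff L = 0) :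
    eulerDeriv (expMv L) = eulerDeriv L * expMv L := by
  ext e
  have htrunc : ∀ u ≤ e, coeff u (expMv L) = coeff u (expTrunc e.degree L) := fun u hu =>
    coeff_expMv_of_degree_le hL (Finsupp.degree_mono hu)
  rw [coeff_eulerDeriv, coeff_expMv_of_degree_le hL (Nat.le_succ _), ← coeff_eulerDeriv,
    eulerDeriv_expTrunc_succ, coeff_mul_congr (fun _ _ => rfl) htrunc]

theorem eq_expMv_of_eulerDeriv_eq_mul (hL : constantCoeff L = 0) {Y : MvPowerSeries (Fin 2) ℚ}
    (hY : constantCoeff Y = 1) (h : eulerDeriv Y = eulerDeriv L * Y) : Y = expMv L := by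
  refine sub_eq_zero.mp (eq_zero_of_eulerDeriv_eq_mul (constantCoeff_eulerDeriv L) ?_ ?_)
  · rw [map_sub, hY, constantCoeff_expMv, sub_self]
  · rw [map_sub, h, eulerDeriv_expMv hL, mul_sub]

theorem expMv_zero : expMv 0 = 1 :=
  (eq_expMv_of_eulerDeriv_eq_mul (map_zero _) (map_one _)
    (by rw [Derivation.map_one_eq_zero, map_zero, zero_mul])).symm

theorem expMv_add (hF : constantCoeff F = 0) (hG : constantCoeff G = 0) :
    expMv (F + G) = expMv F * expMv G := by
  refine (eq_expMv_of_eulerDeriv_eq_mul (by rw [map_add, hF, hG, add_zero]) ?_ ?_).symm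
  · rw [map_mul, constantCoeff_expMv, constantCoeff_expMv, one_mul]
  · rw [Derivation.leibniz, eulerDeriv_expMv hF, eulerDeriv_expMv hG, map_add, smul_eq_mul,
      smul_eq_mul]
    ring

theorem expMv_sum {ι : Type*} (s : Finset ι) (f : ι → MvPowerSeries (Fin 2) ℚ)
    (h : ∀ i ∈ s, constantCoeff (f i) = 0) : expMv (∑ i ∈ s, f i) = ∏ i ∈ s, expMv (f i) := by
  classical
  induction s using Finset.induction_on with
  | empty => rw [sum_empty, prod_empty, expMv_zero]
  | insert i s hi ih =>
    have hs : ∀ j ∈ s, constantCoeff (f j) = 0 := fun j hj => h j (mem_insert_of_mem hj)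
    rw [sum_insert hi, prod_insert hi, expMv_add (h i (mem_insert_self i s))
      (by rw [map_sum]; exact sum_eq_zero hs), ih hs]

theorem val_zpow_eq_expMv (hL : constantCoeff L = 0) (u : (MvPowerSeries (Fin 2) ℚ)ˣ)
    (hu : (u : MvPowerSeries (Fin 2) ℚ) = expMv L) (N : ℤ) :
    ((u ^ N : (MvPowerSeries (Fin 2) ℚ)ˣ) : MvPowerSeries (Fin 2) ℚ) = expMv ((N : ℚ) • L) := by
  have hsmul (c : ℚ) : constantCoeff (c • L) = 0 := by
    rw [← coeff_zero_eq_constantCoeff_apply, coeff_smul, coeff_zero_eq_constantCoeff_apply, hL,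
      mul_zero]
  have hneg : constantCoeff (-L) = 0 := by rw [map_neg, hL, neg_zero]
  have hinv : ((u⁻¹ : (MvPowerSeries (Fin 2) ℚ)ˣ) : MvPowerSeries (Fin 2) ℚ) = expMv (-L) :=
    Units.inv_eq_of_mul_eq_one_left (by rw [hu, ← expMv_add hneg hL, neg_add_cancel, expMv_zero])
  induction N using Int.induction_on with
  | zero => rw [zpow_zero, Units.val_one, Int.cast_zero, zero_smul, expMv_zero]
  | succ n ih =>
    rw [zpow_add_one, Units.val_mul, ih, hu, ← expMv_add (hsmul _) hL, Int.cast_add,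
      Int.cast_one, add_smul, one_smul]
  | pred n ih =>
    rw [zpow_sub_one, Units.val_mul, ih, hinv, ← expMv_add (hsmul _) hneg, Int.cast_sub,
      Int.cast_one, sub_smul, one_smul, sub_eq_add_neg]

theorem expMv_logOneSub (hF : constantCoeff F = 0) : expMv (logOneSub F) = 1 - F :=
  (eq_expMv_of_eulerDeriv_eq_mul (constantCoeff_logOneSub F)
    (by rw [map_sub, map_one, hF, sub_zero])
    (by rw [eulerDeriv_logOneSub_mul_one_sub hF, map_sub, Derivation.map_one_eq_zero,
      zero_sub])).symm

end Exponential

def qtExponent (p : ℕ × ℕ) : Fin 2 →₀ ℕ := Finsupp.single 0 p.2 + Finsupp.single 1 p.1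

theorem eq_nsmul_qtExponent_iff {e : Fin 2 →₀ ℕ} {k : ℕ} {p : ℕ × ℕ} :
    e = k • qtExponent p ↔ e 0 = k * p.2 ∧ e 1 = k * p.1 := by
  simp [qtExponent, Finsupp.ext_iff, Fin.forall_fin_two]

theorem qtExponent_ne_zero {p : ℕ × ℕ} (hp : 1 ≤ p.1 ∧ 1 ≤ p.2) : qtExponent p ≠ 0 := by
  intro h
  have := congrArg (· 0) h
  simp [qtExponent] at this
  omega

theorem eq_nsmul_qtExponent_of_mem_divisors_gcd {u : Fin 2 →₀ ℕ} {k : ℕ}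
    (hk : k ∈ ((u 0).gcd (u 1)).divisors) : u = k • qtExponent (u 1 / k, u 0 / k) := by
  have hkg := (Nat.mem_divisors.mp hk).1
  exact eq_nsmul_qtExponent_iff.mpr
    ⟨(Nat.mul_div_cancel' (hkg.trans (Nat.gcd_dvd_left _ _))).symm,
      (Nat.mul_div_cancel' (hkg.trans (Nat.gcd_dvd_right _ _))).symm⟩

theorem mem_divisors_gcd_of_eq_nsmul_qtExponent {u : Fin 2 →₀ ℕ} {k : ℕ} {p : ℕ × ℕ}
    (hp : 1 ≤ p.1 ∧ 1 ≤ p.2) (hk : k ≠ 0) (h : u = k • qtExponent p) :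
    k ∈ ((u 0).gcd (u 1)).divisors ∧ p = (u 1 / k, u 0 / k) := by
  obtain ⟨h0, h1⟩ := eq_nsmul_qtExponent_iff.mp h
  refine ⟨Nat.mem_divisors.mpr ⟨Nat.dvd_gcd ⟨p.2, h0⟩ ⟨p.1, h1⟩, ?_⟩, ?_⟩
  · exact (Nat.gcd_pos_of_pos_left _ (h0 ▸ Nat.mul_pos (Nat.pos_of_ne_zero hk) hp.2)).ne'
  · rw [h0, h1, Nat.mul_div_cancel_left _ (Nat.pos_of_ne_zero hk),
      Nat.mul_div_cancel_left _ (Nat.pos_of_ne_zero hk)]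

theorem neg_q2_pow_mul_t2_pow (p : ℕ × ℕ) :
    (-q2) ^ p.2 * t2 ^ p.1 = monomial (qtExponent p) ((-1 : ℚ) ^ p.2) := by
  rw [q2, t2, neg_pow, X_pow_eq, X_pow_eq, qtExponent, mul_assoc, monomial_mul_monomial, one_mul,
    ← map_one C, ← map_neg, ← map_pow, ← smul_eq_C_mul, ← LinearMap.map_smul, smul_eq_mul,
    mul_one]

def logFactor (a : ℕ → ℤ) (p : ℕ × ℕ) : MvPowerSeries (Fin 2) ℚ :=
  if 1 ≤ p.1 ∧ 1 ≤ p.2 then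
    (((p.2 : ℤ) * a p.1 : ℤ) : ℚ) • logOneSub ((-q2) ^ p.2 * t2 ^ p.1)
  else 0

theorem constantCoeff_logFactor (a : ℕ → ℤ) (p : ℕ × ℕ) :
    constantCoeff (logFactor a p) = 0 := by
  unfold logFactor
  split_ifs
  · rw [← coeff_zero_eq_constantCoeff_apply, coeff_smul, coeff_zero_eq_constantCoeff_apply,
      constantCoeff_logOneSub, mul_zero]
  · exact map_zero _

theorem factor_eq_expMv_logFactor (a : ℕ → ℤ) (p : ℕ × ℕ) :
    factor a p = expMv (logFactor a p) := by
  unfold factor logFactor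
  split_ifs with hp
  · have hx : constantCoeff ((-q2) ^ p.2 * t2 ^ p.1) = 0 := by
      rw [neg_q2_pow_mul_t2_pow, ← coeff_zero_eq_constantCoeff_apply, coeff_monomial,
        if_neg (qtExponent_ne_zero hp).symm]
    exact val_zpow_eq_expMv (constantCoeff_logOneSub _) _
      (by rw [IsUnit.unit_spec, expMv_logOneSub hx]) _
  · exact expMv_zero.symm

theorem prod_factor_eq_expMv (a : ℕ → ℤ) (s : Finset (ℕ × ℕ)) :
    ∏ p ∈ s, factor a p = expMv (∑ p ∈ s, logFactor a p) := by
  rw [expMv_sum _ _ fun p _ => constantCoeff_logFactor a p]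
  exact prod_congr rfl fun p _ => factor_eq_expMv_logFactor a p

theorem coeff_logFactor_of_eq_nsmul (a : ℕ → ℤ) {p : ℕ × ℕ} (hp : 1 ≤ p.1 ∧ 1 ≤ p.2)
    {e : Fin 2 →₀ ℕ} {k : ℕ} (he : e = k • qtExponent p) :
    coeff e (logFactor a p) = (-1) ^ (e 0 - 1) * (e 0 : ℚ) / (k : ℚ) ^ 2 * (a p.1 : ℚ) := by
  rw [(eq_nsmul_qtExponent_iff.mp he).1, he, logFactor, if_pos hp, coeff_smul,
    neg_q2_pow_mul_t2_pow, coeff_nsmul_logOneSub_monomial (qtExponent_ne_zero hp)]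
  rcases Nat.eq_zero_or_pos k with rfl | hk
  · simp
  obtain ⟨n, hn⟩ : ∃ n, k * p.2 = n + 1 := ⟨k * p.2 - 1, by have := Nat.mul_pos hk hp.2; omega⟩
  have hk' : (k : ℚ) ≠ 0 := Nat.cast_ne_zero.mpr hk.ne'
  have hn' : ((n + 1 : ℕ) : ℚ) = k * p.2 := by rw [← hn]; push_cast; ring
  rw [hn, Nat.add_sub_cancel, ← pow_mul, mul_comm p.2, hn, hn']
  field_simp
  push_cast
  ring

theorem coeff_logFactor_eq_zero (a : ℕ → ℤ) {p : ℕ × ℕ} {e : Fin 2 →₀ ℕ}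
    (h : 1 ≤ p.1 ∧ 1 ≤ p.2 → ∀ k ≠ 0, e ≠ k • qtExponent p) : coeff e (logFactor a p) = 0 := by
  unfold logFactor
  split_ifs with hp
  · rw [coeff_smul, neg_q2_pow_mul_t2_pow, coeff_logOneSub_monomial_eq_zero _ (h hp), mul_zero]
  · exact map_zero _

theorem coeff_sum_logFactor_of_not_pos (a : ℕ → ℤ) {u : Fin 2 →₀ ℕ} (hu : ¬(1 ≤ u 0 ∧ 1 ≤ u 1))
    (s : Finset (ℕ × ℕ)) : coeff u (∑ p ∈ s, logFactor a p) = 0 := by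
  rw [map_sum]
  refine sum_eq_zero fun p _ => coeff_logFactor_eq_zero a fun hp k hk hup => hu ?_
  obtain ⟨h0, h1⟩ := eq_nsmul_qtExponent_iff.mp hup
  exact ⟨h0 ▸ Nat.mul_pos (Nat.pos_of_ne_zero hk) hp.2,
    h1 ▸ Nat.mul_pos (Nat.pos_of_ne_zero hk) hp.1⟩

theorem coeff_sum_logFactor_of_pos (a : ℕ → ℤ) {e u : Fin 2 →₀ ℕ} (hu : u ≤ e)
    (hpos : 1 ≤ u 0 ∧ 1 ≤ u 1) {s : Finset (ℕ × ℕ)} (hs : Icc 1 (e 1) ×ˢ Icc 1 (e 0) ⊆ s) :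
    coeff u (∑ p ∈ s, logFactor a p) = ∑ k ∈ ((u 0).gcd (u 1)).divisors,
      (-1) ^ (u 0 - 1) * (u 0 : ℚ) / (k : ℚ) ^ 2 * (a (u 1 / k) : ℚ) := by
  set divs := ((u 0).gcd (u 1)).divisors
  have hquot : ∀ k ∈ divs, 1 ≤ u 1 / k ∧ 1 ≤ u 0 / k := fun k hk => by
    have hkg := (Nat.mem_divisors.mp hk).1
    exact ⟨Nat.div_pos (Nat.le_of_dvd hpos.2 (hkg.trans (Nat.gcd_dvd_right _ _)))
        (Nat.pos_of_mem_divisors hk),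
      Nat.div_pos (Nat.le_of_dvd hpos.1 (hkg.trans (Nat.gcd_dvd_left _ _)))
        (Nat.pos_of_mem_divisors hk)⟩
  have hsub : divs.image (fun k => (u 1 / k, u 0 / k)) ⊆ s := fun p hp => by
    obtain ⟨k, hk, rfl⟩ := mem_image.mp hp
    exact hs (mem_product.mpr ⟨mem_Icc.mpr ⟨(hquot k hk).1, (Nat.div_le_self _ _).trans (hu 1)⟩,
      mem_Icc.mpr ⟨(hquot k hk).2, (Nat.div_le_self _ _).trans (hu 0)⟩⟩)
  have hzero : ∀ p ∈ s, p ∉ divs.image (fun k => (u 1 / k, u 0 / k)) →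
      coeff u (logFactor a p) = 0 := fun p _ hp =>
    coeff_logFactor_eq_zero a fun hvalid k hk hup => hp <| mem_image.mpr <|
      let h := mem_divisors_gcd_of_eq_nsmul_qtExponent hvalid hk hup
      ⟨k, h.1, h.2.symm⟩
  have hinj : Set.InjOn (fun k => (u 1 / k, u 0 / k)) divs := fun k hk k' hk' h => by
    have h0 := (eq_nsmul_qtExponent_iff.mp (eq_nsmul_qtExponent_of_mem_divisors_gcd hk)).1
    have h0' := (eq_nsmul_qtExponent_iff.mp (eq_nsmul_qtExponent_of_mem_divisors_gcd hk')).1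
    simp only [Prod.mk.injEq] at h h0 h0'
    rw [h.2] at h0
    exact Nat.eq_of_mul_eq_mul_right (hquot k' hk').2 (h0.symm.trans h0')
  rw [map_sum, ← sum_subset hsub hzero, sum_image hinj]
  exact sum_congr rfl fun k hk =>
    coeff_logFactor_of_eq_nsmul a (hquot k hk) (eq_nsmul_qtExponent_of_mem_divisors_gcd hk)

theorem coeff_sum_logFactor (a : ℕ → ℤ) {e u : Fin 2 →₀ ℕ} (hu : u ≤ e) {s : Finset (ℕ × ℕ)}
    (hs : Icc 1 (e 1) ×ˢ Icc 1 (e 0) ⊆ s) :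
    coeff u (∑ p ∈ s, logFactor a p) = rhsSeries a u := by
  unfold rhsSeries
  split_ifs with hpos
  · exact coeff_sum_logFactor_of_pos a hu hpos hs
  · exact coeff_sum_logFactor_of_not_pos a hpos s

/-- For `a : ℤ_{≥1} → ℤ`, the infinite product
`∏_{m≥1} ∏_{j≥1} (1 - (-q)^j t^m)^{j a(m)}` converges in `ℚ⟦q,t⟧` — i.e. every
coefficient of the partial products over finite sets of indices `(m,j)` eventually
stabilizes (this is convergence for the product of the discrete topologies on the
coefficients) — and its value `P` equals
`exp (∑_{n≥1} ∑_{m≥1} (∑_{k ∣ gcd(n,m)} ((-1)^{n-1} n / k²) a(m/k)) qⁿ tᵐ)`. -/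
theorem stmt6 (a : ℕ → ℤ) :
    ∃ P : MvPowerSeries (Fin 2) ℚ,
      (∀ e : Fin 2 →₀ ℕ,
        ∀ᶠ s : Finset (ℕ × ℕ) in Filter.atTop,
          MvPowerSeries.coeff e (∏ p ∈ s, factor a p) = MvPowerSeries.coeff e P) ∧
      P = expMv (rhsSeries a) := by
  refine ⟨expMv (rhsSeries a), fun e => ?_, rfl⟩
  filter_upwards [Filter.eventually_ge_atTop (Icc 1 (e 1) ×ˢ Icc 1 (e 0))] with s hs
  rw [prod_factor_eq_expMv]
  exact coeff_expMv_congr fun u hu => coeff_sum_logFactor a hu hs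

end
end

section
/- Let m ≥ 1 and let (L_j)_{j≥1} be Laurent polynomials over ℚ, L_j = Σ_{n∈ℤ} ℓ(n,j) q^n, whose coefficients satisfy ℓ(n,j) = ℓ(−n,j) for all n and j. Then Σ_{a ≥ 1, a ∣ m} (μ(a)/a) · σ_a(L_{m/a}) = Σ_{g≥1} c_g · f_g(q), where c_g = Σ_{n ≥ g−1} Σ_{a ≥ 1, a ∣ gcd(n,m)} (μ(a)/a) · (−1)^{n + n/a} · ℓ(n/a, m/a) · c_g^{(n)} (with gcd(0,m) interpreted as m), all sums having only finitely many nonzero terms. -/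
open LaurentPolynomial

noncomputable section

/-- `σ_a`, the `ℚ`-algebra endomorphism of `ℚ[q,q⁻¹]` determined by
`σ_a(q) = -(-q)^a` (a unit of `ℚ[q,q⁻¹]`). -/
def σL (a : ℕ) : LaurentPolynomial ℚ →ₐ[ℚ] LaurentPolynomial ℚ :=
  AddMonoidAlgebra.lift ℚ (LaurentPolynomial ℚ) ℤ
    ((Units.coeHom (LaurentPolynomial ℚ)).comp
      (zpowersHom (LaurentPolynomial ℚ)ˣ (-(-(isUnit_T (R := ℚ) 1).unit) ^ a)))

/-!
Since `σ_a (q ^ k) = ((-1) ^ (a + 1)) ^ k q ^ (a k)`, the left side `P` has `n`-th coefficient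
`∑_{a ∣ gcd(n, m)} (μ(a)/a) (-1)^(n + n/a) ℓ(n/a, m/a)`, and it inherits the symmetry
`q ↦ q⁻¹` of the `L_j`. A symmetric Laurent polynomial is `P_0 + ∑_{n ≥ 1} P_n (q ^ n + q ^ (-n))`,
and `q ^ n + q ^ (-n) = ∑_g c_g^{(n)} f_g`: both sides satisfy
`E_{n+2} = (f_2 - 2) E_{n+1} - E_n`, because `f_2 f_g = f_{g+1}` and the `c_g^{(n)}` satisfy the
matching recurrence, a second difference of Pascal's rule.
-/

theorem Nat.cast_choose_second_difference {R : Type*} [CommRing R] (n r : ℕ) :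
    ((n + 2).choose (r + 2) : R) - 2 * (n + 1).choose (r + 2) + n.choose (r + 2) = n.choose r := by
  rw [Nat.choose_succ_succ' (n + 1), Nat.choose_succ_succ' n, Nat.choose_succ_succ' n (r + 1)]
  push_cast
  ring

theorem finsum_mem_eq_sum_range {M : Type*} [AddCommMonoid M] {f : ℕ → M} {s : Set ℕ} {N : ℕ}
    (h : ∀ n, f n ≠ 0 → n ∈ s ∧ n < N) : ∑ᶠ n ∈ s, f n = ∑ n ∈ Finset.range N, f n :=
  finsum_mem_eq_sum_of_inter_support_eq f <| Set.ext fun n =>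
    ⟨fun ⟨_, hn⟩ => ⟨Finset.mem_range.2 (h n hn).2, hn⟩, fun ⟨_, hn⟩ => ⟨(h n hn).1, hn⟩⟩

theorem LaurentPolynomial.exists_coeff_natCast_eq_zero {R : Type*} [Semiring R] (P : R[T;T⁻¹]) :
    ∃ N : ℕ, ∀ n : ℕ, N < n → P.coeff n = 0 := by
  refine ⟨P.coeff.support.sup Int.natAbs, fun n hn => ?_⟩
  by_contra h
  have := Finset.le_sup (f := Int.natAbs) (Finsupp.mem_support_iff.2 h)
  omega

theorem cL_zero_left (k : ℕ) : cL 0 k = 0 := by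
  simp [cL]

theorem cL_eq_zero_of_add_two_le {g k : ℕ} (h : k + 2 ≤ g) : cL g k = 0 := by
  simp [cL, Nat.choose_eq_zero_of_lt (show k + g < 2 * g - 1 by omega),
    Nat.choose_eq_zero_of_lt (show k + g - 2 < 2 * g - 1 by omega)]

theorem pos_of_cL_ne_zero {g k : ℕ} (h : cL g k ≠ 0) : 0 < g :=
  Nat.pos_of_ne_zero fun hg => h (hg ▸ cL_zero_left k)

theorem lt_add_two_of_cL_ne_zero {g k : ℕ} (h : cL g k ≠ 0) : g < k + 2 :=
  Nat.lt_of_not_le fun hg => h (cL_eq_zero_of_add_two_le hg)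

theorem cL_succ_of_add_eq {g k n : ℕ} (h : k + g = n + 1) :
    cL (g + 1) k = (-1) ^ (n + 1) * (((n + 2).choose (2 * g + 1) : ℚ) - n.choose (2 * g + 1)) := by
  rw [cL, show k + (g + 1) - 1 = n + 1 by omega, show k + (g + 1) - 2 = n by omega,
    show k + (g + 1) = n + 2 by omega, show 2 * (g + 1) - 1 = 2 * g + 1 by omega]

theorem cL_one_succ (k : ℕ) : cL 1 (k + 1) = 2 * (-1) ^ (k + 1) := by
  rw [cL_succ_of_add_eq (g := 0) (n := k) rfl]
  simp only [mul_zero, zero_add, Nat.choose_one_right]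
  push_cast
  ring

theorem cL_succ_succ_add_two (g k : ℕ) :
    cL (g + 2) (k + 2) = cL (g + 1) (k + 1) - 2 * cL (g + 2) (k + 1) - cL (g + 2) k := by
  rw [cL_succ_of_add_eq (n := k + g + 2) (by omega), cL_succ_of_add_eq (n := k + g) (by omega),
    cL_succ_of_add_eq (n := k + g + 1) (by omega), cL_succ_of_add_eq (n := k + g) (by omega)]
  have h₁ := Nat.cast_choose_second_difference (R := ℚ) (k + g + 2) (2 * g + 1)
  have h₂ := Nat.cast_choose_second_difference (R := ℚ) (k + g) (2 * g + 1)
  rw [show 2 * (g + 1) + 1 = 2 * g + 1 + 2 by ring]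
  linear_combination (-1 : ℚ) ^ (k + g + 1) * (h₁ - h₂)

/-- The coefficient of `f_g` in `q ^ k + q ^ (-k)`; it differs from `cL g k` only at `k = 0`,
where `q ^ 0 + q ^ 0 = 2 f_1`. -/
def dL (g k : ℕ) : ℚ := (if k = 0 then 2 else 1) * cL g k

theorem dL_zero_left (k : ℕ) : dL 0 k = 0 := by
  simp [dL, cL_zero_left]

theorem dL_eq_zero_of_add_two_le {g k : ℕ} (h : k + 2 ≤ g) : dL g k = 0 := by
  simp [dL, cL_eq_zero_of_add_two_le h]

theorem dL_one (k : ℕ) : dL 1 k = 2 * (-1) ^ k := by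
  cases k with
  | zero => simp [dL, cL]
  | succ k => simp [dL, cL_one_succ]

theorem dL_succ_add_two (g k : ℕ) :
    dL (g + 1) (k + 2) = dL g (k + 1) - 2 * dL (g + 1) (k + 1) - dL (g + 1) k := by
  rcases g with _ | g
  · simp only [zero_add, dL_one, dL_zero_left]
    ring
  · have h := cL_succ_succ_add_two g k
    rcases k with _ | k
    · simp_all [dL, cL_eq_zero_of_add_two_le]
    · simp_all [dL]

theorem fL_one : fL 1 = 1 := by
  simp [fL]

theorem fL_two : fL 2 = T 1 + 2 + T (-1) := by
  rw [fL, show (1 : ℤ) - (2 : ℕ) = -1 by norm_num, show 2 * 2 - 2 = 2 by rfl, sq]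
  simp only [mul_add, add_mul, mul_one, one_mul, ← T_add]
  norm_num
  ring

theorem fL_two_mul {g : ℕ} (hg : g ≠ 0) : fL 2 * fL g = fL (g + 1) := by
  rw [fL, fL, fL, show 2 * (g + 1) - 2 = 2 * 2 - 2 + (2 * g - 2) by omega, pow_add,
    show 1 - ((g + 1 : ℕ) : ℤ) = 1 - (2 : ℕ) + (1 - g) by push_cast; ring, T_add]
  ring

theorem T_add_two_add_T_neg (k : ℤ) :
    (T (k + 2) + T (-(k + 2)) : LaurentPolynomial ℚ) =
      (fL 2 - 2) * (T (k + 1) + T (-(k + 1))) - (T k + T (-k)) := by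
  rw [fL_two, show (T 1 + 2 + T (-1) - 2 : LaurentPolynomial ℚ) = T 1 + T (-1) by ring]
  simp only [mul_add, add_mul, ← T_add]
  ring_nf

theorem sum_range_smul_fL_of_le {c : ℕ → ℚ} {k N : ℕ} (hc : ∀ g, k + 2 ≤ g → c g = 0)
    (h : k + 2 ≤ N) : ∑ g ∈ Finset.range N, c g • fL g = ∑ g ∈ Finset.range (k + 2), c g • fL g := by
  refine (Finset.sum_subset (Finset.range_subset_range.2 h) fun g _ hg => ?_).symm
  rw [hc g (by simpa using hg), zero_smul]

theorem fL_two_mul_sum_range_dL_smul_fL (k N : ℕ) :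
    fL 2 * ∑ g ∈ Finset.range N, dL g k • fL g = ∑ g ∈ Finset.range N, dL g k • fL (g + 1) := by
  rw [Finset.mul_sum]
  refine Finset.sum_congr rfl fun g _ => ?_
  rcases eq_or_ne g 0 with rfl | hg
  · simp [dL_zero_left]
  · rw [mul_smul_comm, fL_two_mul hg]

theorem T_add_T_neg_eq_sum_dL_smul_fL (k : ℕ) :
    (T k + T (-k) : LaurentPolynomial ℚ) = ∑ g ∈ Finset.range (k + 2), dL g k • fL g := by
  induction k using Nat.twoStepInduction with
  | zero => simp [Finset.sum_range_succ, dL_zero_left, dL_one, fL, two_smul]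
  | one =>
    have h₁ : dL 1 1 = -2 := by norm_num [dL_one]
    have h₂ : dL 2 1 = 1 := by norm_num [dL, cL, Nat.choose_eq_zero_of_lt]
    simp [Finset.sum_range_succ, dL_zero_left, h₁, h₂, fL_one, fL_two, two_smul]
    ring
  | more k ih₀ ih₁ =>
    have ih₁' := ih₁
    rw [← sum_range_smul_fL_of_le (N := k + 4) (fun g => dL_eq_zero_of_add_two_le) (by omega)]
      at ih₀ ih₁'
    push_cast at ih₀ ih₁ ih₁' ⊢
    rw [T_add_two_add_T_neg, sub_mul, ih₀]
    nth_rw 1 [ih₁]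
    -- absorb `f_2` via `f_2 f_g = f_{g+1}`, then shift all sums to `g + 1` (the `g = 0` terms vanish)
    rw [ih₁', fL_two_mul_sum_range_dL_smul_fL, Finset.mul_sum,
      Finset.sum_range_succ' (fun g => 2 * dL g (k + 1) • fL g) (k + 3),
      Finset.sum_range_succ' (fun g => dL g k • fL g) (k + 3),
      Finset.sum_range_succ' (fun g => dL g (k + 2) • fL g) (k + 3)]
    simp only [dL_zero_left, zero_smul, mul_zero, add_zero, ← Finset.sum_sub_distrib]
    refine Finset.sum_congr rfl fun g _ => ?_
    rw [dL_succ_add_two]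
    simp only [smul_eq_C_mul, map_sub, map_mul, map_ofNat]
    ring

def symmT (k : ℕ) : LaurentPolynomial ℚ := if k = 0 then 1 else T k + T (-k)

theorem sum_range_cL_smul_fL (k : ℕ) : ∑ g ∈ Finset.range (k + 2), cL g k • fL g = symmT k := by
  rcases k with _ | k
  · simp [symmT, Finset.sum_range_succ, fL_one, cL]
  · rw [symmT, if_neg k.succ_ne_zero, T_add_T_neg_eq_sum_dL_smul_fL]
    simp [dL]

theorem coeff_symmT (k : ℕ) (z : ℤ) : (symmT k).coeff z = if z.natAbs = k then 1 else 0 := by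
  rcases k with _ | k
  · simp [symmT, ← T_zero, T_apply, eq_comm]
  · simp only [symmT, Nat.add_one_ne_zero, if_false, AddMonoidAlgebra.coeff_add,
      Finsupp.add_apply, T_apply]
    split_ifs <;> first | (exfalso; omega) | norm_num

theorem eq_sum_coeff_smul_symmT {P : LaurentPolynomial ℚ}
    (hP : ∀ z, P.coeff z = P.coeff (-z)) {N : ℕ} (hN : ∀ n : ℕ, N < n → P.coeff n = 0) :
    P = ∑ n ∈ Finset.range (N + 1), P.coeff n • symmT n := by
  ext z
  simp only [AddMonoidAlgebra.coeff_sum, Finset.sum_apply', AddMonoidAlgebra.coeff_smul_apply,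
    coeff_symmT, smul_eq_mul, mul_ite, mul_one, mul_zero, Finset.sum_ite_eq,
    Finset.mem_range]
  have hz : P.coeff z = P.coeff z.natAbs := by
    rcases Int.natAbs_eq z with h | h
    · exact congrArg P.coeff h
    · rw [hP]
      exact congrArg P.coeff (by omega)
  split_ifs with h
  · exact hz
  · exact hz.trans (hN _ (by omega))

theorem eq_sum_smul_fL_of_coeff_neg {P : LaurentPolynomial ℚ}
    (hP : ∀ z, P.coeff z = P.coeff (-z)) {N : ℕ} (hN : ∀ n : ℕ, N < n → P.coeff n = 0) :
    P = ∑ g ∈ Finset.range (N + 2), (∑ n ∈ Finset.range (N + 1), P.coeff n * cL g n) • fL g :=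
  calc P = ∑ n ∈ Finset.range (N + 1), P.coeff n • ∑ g ∈ Finset.range (n + 2), cL g n • fL g := by
        simp_rw [sum_range_cL_smul_fL]
        exact eq_sum_coeff_smul_symmT hP hN
    _ = ∑ n ∈ Finset.range (N + 1), P.coeff n • ∑ g ∈ Finset.range (N + 2), cL g n • fL g := by
        refine Finset.sum_congr rfl fun n hn => ?_
        rw [sum_range_smul_fL_of_le (N := N + 2) (fun g => cL_eq_zero_of_add_two_le)
          (by simpa [Nat.lt_succ_iff] using hn)]
    _ = _ := by
        simp_rw [Finset.smul_sum, smul_smul]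
        rw [Finset.sum_comm]
        simp_rw [Finset.sum_smul]

theorem σL_T_one (a : ℕ) : σL a (T 1) = ((-1 : ℚ) ^ (a + 1)) • T a := by
  erw [σL, AddMonoidAlgebra.lift_single, one_smul]
  simp only [MonoidHom.coe_comp, Function.comp_apply, zpowersHom_apply, toAdd_ofAdd, zpow_ofNat,
    pow_one, Units.coeHom_apply, Units.val_neg, Units.val_pow_eq_pow_val, IsUnit.unit_spec]
  rw [neg_pow, T_pow, smul_eq_C_mul, map_pow, map_neg, map_one, mul_one, pow_succ]
  ring

theorem σL_T (a : ℕ) (k : ℤ) : σL a (T k) = ((-1 : ℚ) ^ (a + 1)) ^ k • T (a * k) := by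
  have hε : ((-1 : ℚ) ^ (a + 1)) ≠ 0 := by simp
  have h_neg_one : σL a (T (-1)) = ((-1 : ℚ) ^ (a + 1)) ^ (-1 : ℤ) • T (-a) := by
    have h : σL a (T (-1)) * σL a (T 1) = 1 := by rw [← map_mul, ← T_add]; simp
    calc σL a (T (-1))
        = σL a (T (-1)) * (σL a (T 1) * (((-1 : ℚ) ^ (a + 1)) ^ (-1 : ℤ) • T (-a))) := by
          rw [σL_T_one, smul_mul_smul, ← T_add]; simp [hε]
      _ = _ := by rw [← mul_assoc, h, one_mul]
  induction k using Int.induction_on with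
  | zero => simp
  | succ k ih =>
    rw [T_add, map_mul, ih, σL_T_one, smul_mul_smul, ← T_add, zpow_add_one₀ hε]
    ring_nf
  | pred k ih =>
    rw [sub_eq_add_neg, T_add, map_mul, ih, h_neg_one, smul_mul_smul, ← T_add, ← zpow_add₀ hε]
    ring_nf

theorem σL_single (a : ℕ) (k : ℤ) (r : ℚ) :
    σL a (AddMonoidAlgebra.single k r) =
      AddMonoidAlgebra.single (a * k) (((-1 : ℚ) ^ (a + 1)) ^ k * r) := by
  rw [single_eq_C_mul_T, single_eq_C_mul_T, ← smul_eq_C_mul, ← smul_eq_C_mul, map_smul, σL_T,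
    smul_smul, mul_comm]

theorem coeff_σL_mul {a : ℕ} (ha : a ≠ 0) (Q : LaurentPolynomial ℚ) (k : ℤ) :
    (σL a Q).coeff (a * k) = ((-1 : ℚ) ^ (a + 1)) ^ k * Q.coeff k := by
  induction Q using AddMonoidAlgebra.induction_linear with
  | zero => simp
  | add P Q hP hQ => simp [hP, hQ, mul_add]
  | single n r =>
    simp only [σL_single, AddMonoidAlgebra.coeff_single, Finsupp.single_apply]
    by_cases h : n = k <;> simp [ha, h]

theorem coeff_σL_of_not_dvd (a : ℕ) (Q : LaurentPolynomial ℚ) {z : ℤ} (h : ¬(a : ℤ) ∣ z) :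
    (σL a Q).coeff z = 0 := by
  induction Q using AddMonoidAlgebra.induction_linear with
  | zero => simp
  | add P Q hP hQ => simp [hP, hQ]
  | single n r =>
    rw [σL_single, AddMonoidAlgebra.coeff_single, Finsupp.single_apply, if_neg]
    rintro rfl
    exact h (dvd_mul_right _ _)

theorem coeff_σL_natCast {a : ℕ} (ha : a ≠ 0) (Q : LaurentPolynomial ℚ) (n : ℕ) :
    (σL a Q).coeff n = if a ∣ n then (-1) ^ (n + n / a) * Q.coeff (n / a : ℕ) else 0 := by
  split_ifs with h
  · obtain ⟨k, rfl⟩ := h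
    rw [Nat.mul_div_cancel_left k (Nat.pos_of_ne_zero ha), Nat.cast_mul, coeff_σL_mul ha,
      zpow_natCast, ← pow_mul, add_one_mul]
  · exact coeff_σL_of_not_dvd a Q (by exact_mod_cast h)

theorem coeff_σL_neg {a : ℕ} (ha : a ≠ 0) {Q : LaurentPolynomial ℚ}
    (hQ : ∀ z, Q.coeff z = Q.coeff (-z)) (z : ℤ) : (σL a Q).coeff z = (σL a Q).coeff (-z) := by
  by_cases h : (a : ℤ) ∣ z
  · obtain ⟨k, rfl⟩ := h
    rw [← mul_neg, coeff_σL_mul ha, coeff_σL_mul ha, hQ k, zpow_neg, ← inv_zpow, ← inv_pow,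
      inv_neg_one]
  · rw [coeff_σL_of_not_dvd a Q h, coeff_σL_of_not_dvd a Q (by rwa [Int.dvd_neg])]

theorem coeff_sum_smul_σL_neg {s : Finset ℕ} (hs : 0 ∉ s) (c : ℕ → ℚ)
    {Q : ℕ → LaurentPolynomial ℚ} (hQ : ∀ a ∈ s, ∀ z, (Q a).coeff z = (Q a).coeff (-z)) (z : ℤ) :
    (∑ a ∈ s, c a • σL a (Q a)).coeff z = (∑ a ∈ s, c a • σL a (Q a)).coeff (-z) := by
  simp only [AddMonoidAlgebra.coeff_sum, Finset.sum_apply', AddMonoidAlgebra.coeff_smul_apply]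
  exact Finset.sum_congr rfl fun a ha => by
    rw [coeff_σL_neg (ne_of_mem_of_not_mem ha hs) (hQ a ha)]

theorem coeff_sum_divisors_smul_σL {m : ℕ} (hm : m ≠ 0) (c : ℕ → ℚ) (Q : ℕ → LaurentPolynomial ℚ)
    (n : ℕ) : (∑ a ∈ m.divisors, c a • σL a (Q a)).coeff n =
      ∑ a ∈ (n.gcd m).divisors, c a * (-1) ^ (n + n / a) * (Q a).coeff (n / a : ℕ) := by
  simp only [AddMonoidAlgebra.coeff_sum, Finset.sum_apply', AddMonoidAlgebra.coeff_smul_apply]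
  rw [Finset.sum_congr rfl fun a ha => by
    rw [coeff_σL_natCast (Nat.pos_of_mem_divisors ha).ne', smul_eq_mul, mul_ite, mul_zero]]
  rw [← Finset.sum_filter]
  refine Finset.sum_congr ?_ fun a _ => by ring
  ext a
  simp only [Finset.mem_filter, Nat.mem_divisors, Nat.dvd_gcd_iff, ne_eq, Nat.gcd_eq_zero_iff]
  tauto

/-- Let `m ≥ 1` and let `(L_j)_{j ≥ 1}` be Laurent polynomials over `ℚ` with
symmetric coefficients `ℓ(n,j) = ℓ(-n,j)` (here `ℓ(n,j) = L j n`).  Then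
`∑_{a ∣ m} (μ(a)/a) σ_a(L_{m/a}) = ∑_{g ≥ 1} c_g f_g(q)` where
`c_g = ∑_{n ≥ g-1} ∑_{a ∣ gcd(n,m)} (μ(a)/a) (-1)^{n+n/a} ℓ(n/a, m/a) c_g^{(n)}`
(with `gcd(0,m) = m`); all the infinite sums are finitely supported and are taken
as `finsum`s. -/
theorem stmt11 (m : ℕ) (hm : 1 ≤ m) (L : ℕ → LaurentPolynomial ℚ)
    (hsym : ∀ j : ℕ, 1 ≤ j → ∀ n : ℤ, (L j).coeff n = (L j).coeff (-n)) :
    ∑ a ∈ m.divisors,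
        (((ArithmeticFunction.moebius a : ℤ) : ℚ) / (a : ℚ)) • σL a (L (m / a)) =
      ∑ᶠ g ∈ Set.Ici (1 : ℕ),
        (∑ᶠ n ∈ Set.Ici (g - 1),
            ∑ a ∈ (Nat.gcd n m).divisors,
              ((ArithmeticFunction.moebius a : ℤ) : ℚ) / (a : ℚ) *
                (-1) ^ (n + n / a) * (L (m / a)).coeff ((n / a : ℕ) : ℤ) * cL g n) • fL g := by
  set P := ∑ a ∈ m.divisors,
    (((ArithmeticFunction.moebius a : ℤ) : ℚ) / (a : ℚ)) • σL a (L (m / a))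
  have hP : ∀ z, P.coeff z = P.coeff (-z) :=
    coeff_sum_smul_σL_neg (by simp) _ fun a ha =>
      hsym _ (Nat.div_pos (Nat.divisor_le ha) (Nat.pos_of_mem_divisors ha))
  have hcoeff (n : ℕ) := coeff_sum_divisors_smul_σL (m := m) (by omega)
    (fun a => ((ArithmeticFunction.moebius a : ℤ) : ℚ) / (a : ℚ)) (fun a => L (m / a)) n
  obtain ⟨N, hN⟩ := P.exists_coeff_natCast_eq_zero
  have hinner (g : ℕ) : ∑ᶠ n ∈ Set.Ici (g - 1), ∑ a ∈ (Nat.gcd n m).divisors,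
      ((ArithmeticFunction.moebius a : ℤ) : ℚ) / (a : ℚ) *
        (-1) ^ (n + n / a) * (L (m / a)).coeff ((n / a : ℕ) : ℤ) * cL g n =
      ∑ n ∈ Finset.range (N + 1), P.coeff n * cL g n := by
    simp_rw [← Finset.sum_mul, ← hcoeff]
    refine finsum_mem_eq_sum_range fun n hn => ⟨?_, ?_⟩
    · have := lt_add_two_of_cL_ne_zero (right_ne_zero_of_mul hn)
      simp only [Set.mem_Ici]
      omega
    · by_contra h
      exact left_ne_zero_of_mul hn (hN n (by omega))
  simp_rw [hinner]
  refine (eq_sum_smul_fL_of_coeff_neg hP hN).trans (finsum_mem_eq_sum_range fun g hg => ?_).symm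
  obtain ⟨n, hn, hne⟩ := Finset.exists_ne_zero_of_sum_ne_zero (left_ne_zero_of_smul hg)
  have := lt_add_two_of_cL_ne_zero (right_ne_zero_of_mul hne)
  exact ⟨pos_of_cL_ne_zero (right_ne_zero_of_mul hne), by simp at hn; omega⟩

end
end
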